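/- For every k ∈ ℕ and all real numbers u, v with 0 ≤ u ≤ v ≤ 1, one has (1 − (1−u)^k) β_k(v) + (1−u)^k v ≥ β_k(u) β_k(v). -/

import Mathlib

open Filter

namespace Boot

noncomputable def beta (k : ℕ) (u : ℝ) : ℝ :=
  (1 - (1 - u) ^ k + Real.sqrt (1 + (4 * u - 2) * (1 - u) ^ k + (1 - u) ^ (2 * k))) / 2

/-- `g_k(x) = -log β_k(1 - e^{-x})`. -/
noncomputable def gfun (k : ℕ) (x : ℝ) : ℝ := - Real.log (beta k (1 - Real.exp (-x)))

/-!
Write `a = (1 - u)^k`. Then `β_k(u)` is the positive root of `x² = (1 - a) x + u a`, so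
multiplying the gap between the two sides by `β_k(u)` gives `a (v β_k(u) - u β_k(v))`,
and the theorem reduces to the monotonicity of `β_k(u) / u`. Scaling a root of `x² = p x + q` by `c` gives a root of `x² = c p x + c² q`,
so `u β_k(v)` and `v β_k(u)` are roots of two such equations whose coefficients are ordered,
because `(1 - (1 - u)^k) / u = ∑_{i<k} (1 - u)^i` decreases in `u`.
-/

noncomputable def posRoot (p q : ℝ) : ℝ := (p + √(p ^ 2 + 4 * q)) / 2

lemma posRoot_nonneg {p q : ℝ} (hq : 0 ≤ q) : 0 ≤ posRoot p q := by
  have : |p| ≤ √(p ^ 2 + 4 * q) := by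
    rw [← Real.sqrt_sq_eq_abs]
    exact Real.sqrt_le_sqrt (by linarith)
  unfold posRoot
  linarith [neg_abs_le p]

lemma posRoot_sq {p q : ℝ} (hq : 0 ≤ q) : posRoot p q ^ 2 = p * posRoot p q + q := by
  have h : √(p ^ 2 + 4 * q) ^ 2 = p ^ 2 + 4 * q := Real.sq_sqrt (by positivity)
  unfold posRoot
  linear_combination h / 4

lemma posRoot_mono {p p' q q' : ℝ} (hp : 0 ≤ p) (hpp' : p ≤ p') (hqq' : q ≤ q') :
    posRoot p q ≤ posRoot p' q' := by
  unfold posRoot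
  gcongr

lemma mul_posRoot {c : ℝ} (hc : 0 ≤ c) (p q : ℝ) :
    c * posRoot p q = posRoot (c * p) (c ^ 2 * q) := by
  have h : √((c * p) ^ 2 + 4 * (c ^ 2 * q)) = c * √(p ^ 2 + 4 * q) := by
    rw [show (c * p) ^ 2 + 4 * (c ^ 2 * q) = c ^ 2 * (p ^ 2 + 4 * q) by ring,
      Real.sqrt_mul (sq_nonneg c), Real.sqrt_sq hc]
  unfold posRoot
  rw [h]
  ring

lemma beta_eq_posRoot (k : ℕ) (u : ℝ) :
    beta k u = posRoot (1 - (1 - u) ^ k) (u * (1 - u) ^ k) := by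
  unfold beta posRoot
  congr 3
  ring

lemma one_sub_one_sub_pow (k : ℕ) (u : ℝ) :
    1 - (1 - u) ^ k = u * ∑ i ∈ Finset.range k, (1 - u) ^ i := by
  rw [← mul_neg_geom_sum, sub_sub_cancel]

lemma mul_one_sub_one_sub_pow_le {u v : ℝ} (k : ℕ) (hu : 0 ≤ u) (huv : u ≤ v) (hv : v ≤ 1) :
    u * (1 - (1 - v) ^ k) ≤ v * (1 - (1 - u) ^ k) := by
  have hsum : ∑ i ∈ Finset.range k, (1 - v) ^ i ≤ ∑ i ∈ Finset.range k, (1 - u) ^ i :=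
    Finset.sum_le_sum fun i _ => pow_le_pow_left₀ (by linarith) (by linarith) i
  rw [one_sub_one_sub_pow, one_sub_one_sub_pow, ← mul_assoc, ← mul_assoc, mul_comm v]
  exact mul_le_mul_of_nonneg_left hsum (mul_nonneg hu (hu.trans huv))

lemma beta_nonneg (k : ℕ) {u : ℝ} (hu : 0 ≤ u) (hu1 : u ≤ 1) : 0 ≤ beta k u := by
  rw [beta_eq_posRoot]
  exact posRoot_nonneg (mul_nonneg hu (pow_nonneg (by linarith) k))

lemma beta_sq (k : ℕ) {u : ℝ} (hu : 0 ≤ u) (hu1 : u ≤ 1) :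
    beta k u ^ 2 = (1 - (1 - u) ^ k) * beta k u + u * (1 - u) ^ k := by
  rw [beta_eq_posRoot]
  exact posRoot_sq (mul_nonneg hu (pow_nonneg (by linarith) k))

lemma mul_beta_le_mul_beta (k : ℕ) {u v : ℝ} (hu : 0 ≤ u) (huv : u ≤ v) (hv : v ≤ 1) :
    u * beta k v ≤ v * beta k u := by
  have hv0 : 0 ≤ v := hu.trans huv
  have hpow : (1 - v) ^ k ≤ (1 - u) ^ k := pow_le_pow_left₀ (by linarith) (by linarith) k
  have hq : u * (1 - v) ^ k ≤ v * (1 - u) ^ k :=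
    mul_le_mul huv hpow (pow_nonneg (by linarith) k) hv0
  rw [beta_eq_posRoot, beta_eq_posRoot, mul_posRoot hu, mul_posRoot hv0]
  apply posRoot_mono
  · exact mul_nonneg hu (sub_nonneg.2 (pow_le_one₀ (by linarith) (by linarith)))
  · exact mul_one_sub_one_sub_pow_le k hu huv hv
  · calc u ^ 2 * (v * (1 - v) ^ k) = u * v * (u * (1 - v) ^ k) := by ring
      _ ≤ u * v * (v * (1 - u) ^ k) := mul_le_mul_of_nonneg_left hq (mul_nonneg hu hv0)
      _ = v ^ 2 * (u * (1 - u) ^ k) := by ring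

/-- **Lemma (Statement 3).** For every `k ∈ ℕ` and `0 ≤ u ≤ v ≤ 1`,
`(1 − (1−u)^k) β_k(v) + (1−u)^k v ≥ β_k(u) β_k(v)`. -/
theorem beta_ineq (k : ℕ) (u v : ℝ) (hu : 0 ≤ u) (huv : u ≤ v) (hv : v ≤ 1) :
    beta k u * beta k v ≤ (1 - (1 - u) ^ k) * beta k v + (1 - u) ^ k * v := by
  have hu1 : u ≤ 1 := huv.trans hv
  have ha : 0 ≤ (1 - u) ^ k := pow_nonneg (by linarith) k
  have hβv : 0 ≤ beta k v := beta_nonneg k (hu.trans huv) hv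
  rcases (beta_nonneg k hu hu1).eq_or_lt with hβu | hβu
  · have h1a : 0 ≤ 1 - (1 - u) ^ k := sub_nonneg.2 (pow_le_one₀ (by linarith) (by linarith))
    rw [← hβu, zero_mul]
    exact add_nonneg (mul_nonneg h1a hβv) (mul_nonneg ha (hu.trans huv))
  · refine le_of_mul_le_mul_left ?_ hβu
    have hmono : 0 ≤ (1 - u) ^ k * (v * beta k u - u * beta k v) :=
      mul_nonneg ha (sub_nonneg.2 (mul_beta_le_mul_beta k hu huv hv))
    linear_combination hmono + beta k v * beta_sq k hu hu1

end Boot
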